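/- arXiv:2111.10632 — 4 statements merged into one kernel-verified Lean document; each statement's English description precedes it below -/
import Mathlib

section
/- Let ξ ∈ S¹ ⊂ ℂ and let r(t) be a complex Laurent polynomial with r(ξ) ≠ 0. If the Laurent polynomial (t⁻¹ - conj(ξ))·r(t) is symmetric (i.e. equal to its image under the involution sending t ↦ t⁻¹ and conjugating coefficients), then Re(conj(ξ)·r(ξ)) = 0. -/
/-!
Since `ξ̄ = ξ⁻¹`, the factor `t⁻¹ - ξ̄` equals `-ξ̄ t⁻¹ (t - ξ)` and its image under `#` is
`t - ξ`. Evaluating the symmetry relation at `ξ` directly only gives `0 = 0`; instead, cancel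
`t - ξ` in the domain `ℂ[T;T⁻¹]` to get `r# = -ξ̄ t⁻¹ r`. Evaluation at a point of `S¹` turns
`#` into complex conjugation, so `conj (r ξ) = -ξ̄² r ξ`, i.e. `ξ̄ r(ξ)` is purely imaginary.
-/

open LaurentPolynomial Complex

/-- The involution `#` on complex Laurent polynomials: `t ↦ t⁻¹` together with complex
conjugation of the coefficients. -/
noncomputable def lstar (p : LaurentPolynomial ℂ) : LaurentPolynomial ℂ :=
  AddMonoidAlgebra.ofCoeff
    (Finsupp.mapRange (starRingEnd ℂ) (map_zero _) (LaurentPolynomial.invert p).coeff)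

/-- Evaluation of a complex Laurent polynomial at a (nonzero) complex number. -/
noncomputable def leval (ω : ℂ) (p : LaurentPolynomial ℂ) : ℂ :=
  Finsupp.sum p.coeff fun n a => a * ω ^ n

open ComplexConjugate

noncomputable def lstarRingHom : ℂ[T;T⁻¹] →+* ℂ[T;T⁻¹] :=
  (AddMonoidAlgebra.mapRingHom ℤ (starRingEnd ℂ)).comp invert.toRingHom

lemma lstar_eq_map_invert (p : ℂ[T;T⁻¹]) :
    lstar p = AddMonoidAlgebra.mapRingHom ℤ (starRingEnd ℂ) (invert p) := rfl

lemma lstar_mul (p q : ℂ[T;T⁻¹]) : lstar (p * q) = lstar p * lstar q :=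
  map_mul lstarRingHom p q

lemma lstar_sub (p q : ℂ[T;T⁻¹]) : lstar (p - q) = lstar p - lstar q :=
  map_sub lstarRingHom p q

lemma lstar_add (p q : ℂ[T;T⁻¹]) : lstar (p + q) = lstar p + lstar q :=
  map_add lstarRingHom p q

lemma lstar_T (n : ℤ) : lstar (T n) = T (-n) := by
  rw [lstar_eq_map_invert, invert_T, T, AddMonoidAlgebra.mapRingHom_single, map_one]

lemma lstar_C (a : ℂ) : lstar (C a) = C (conj a) := by
  rw [lstar_eq_map_invert, invert_C, ← single_eq_C, AddMonoidAlgebra.mapRingHom_single]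
  rfl

lemma leval_add (ω : ℂ) (p q : ℂ[T;T⁻¹]) : leval ω (p + q) = leval ω p + leval ω q :=
  Finsupp.sum_add_index' (fun _ ↦ zero_mul _) fun _ _ _ ↦ add_mul _ _ _

lemma leval_C_mul_T (ω a : ℂ) (n : ℤ) : leval ω (C a * T n) = a * ω ^ n := by
  rw [← single_eq_C_mul_T]
  exact Finsupp.sum_single_index (zero_mul _)

lemma leval_eq_eval₂ (u : ℂˣ) (p : ℂ[T;T⁻¹]) : leval u p = eval₂ (RingHom.id ℂ) u p := by
  induction p using LaurentPolynomial.induction_on' with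
  | add p q hp hq => rw [leval_add, hp, hq, map_add]
  | C_mul_T n a =>
    rw [leval_C_mul_T, eval₂_C_mul_T, RingHom.id_apply, Units.val_zpow_eq_zpow_val]

lemma leval_mul {ω : ℂ} (hω : ω ≠ 0) (p q : ℂ[T;T⁻¹]) :
    leval ω (p * q) = leval ω p * leval ω q := by
  simpa only [← leval_eq_eval₂, Units.val_mk0] using map_mul (eval₂ (RingHom.id ℂ) (.mk0 ω hω)) p q

lemma leval_lstar {ω : ℂ} (hω : ‖ω‖ = 1) (p : ℂ[T;T⁻¹]) :
    leval ω (lstar p) = conj (leval ω p) := by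
  induction p using LaurentPolynomial.induction_on' with
  | add p q hp hq => rw [lstar_add, leval_add, leval_add, hp, hq, map_add]
  | C_mul_T n a =>
    rw [lstar_mul, lstar_C, lstar_T, leval_C_mul_T, leval_C_mul_T, map_mul, map_zpow₀,
      ← RCLike.inv_eq_conj hω, inv_zpow']

lemma T_one_sub_C_ne_zero {R : Type*} [Ring R] [Nontrivial R] (a : R) :
    (T 1 - C a : R[T;T⁻¹]) ≠ 0 := by
  intro h
  have h₁ := congr_arg (fun p ↦ p.coeff 1) h
  simp only [T, ← single_eq_C, AddMonoidAlgebra.coeff_sub, AddMonoidAlgebra.coeff_single] at h₁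
  simp at h₁

lemma T_neg_one_sub_C {R : Type*} [CommRing R] {a b : R} (hab : a * b = 1) :
    (T (-1) - C a : R[T;T⁻¹]) = C (-a) * T (-1) * (T 1 - C b) := by
  have hT : (T (-1) * T 1 : R[T;T⁻¹]) = 1 := by rw [← T_add]; simp
  have hC : (C a * C b : R[T;T⁻¹]) = 1 := by rw [← map_mul, hab, map_one]
  rw [map_neg]
  linear_combination C a * hT - T (-1) * hC

lemma Complex.conj_mul_self_of_norm_eq_one {z : ℂ} (hz : ‖z‖ = 1) : conj z * z = 1 := by
  rw [conj_mul', hz, ofReal_one, one_pow]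

lemma lstar_eq_of_symmetric_mul {ξ : ℂ} (hξ : ‖ξ‖ = 1) {r : ℂ[T;T⁻¹]}
    (hsym : lstar ((T (-1) - C (conj ξ)) * r) = (T (-1) - C (conj ξ)) * r) :
    lstar r = C (-conj ξ) * T (-1) * r := by
  rw [lstar_mul, lstar_sub, lstar_T, lstar_C, conj_conj, neg_neg,
    T_neg_one_sub_C (conj_mul_self_of_norm_eq_one hξ), mul_comm _ (T 1 - C ξ), mul_assoc] at hsym
  exact mul_left_cancel₀ (T_one_sub_C_ne_zero ξ) hsym

lemma Complex.re_eq_zero_of_conj_eq_neg {z : ℂ} (hz : conj z = -z) : z.re = 0 := by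
  have h := add_conj z
  rw [hz, add_neg_cancel, eq_comm, ofReal_eq_zero] at h
  linarith

theorem re_conj_xi_mul_eval_eq_zero_general (ξ : ℂ) (hξ : ‖ξ‖ = 1)
    (r : LaurentPolynomial ℂ)
    (hsym : lstar ((T (-1) - C (starRingEnd ℂ ξ)) * r) = (T (-1) - C (starRingEnd ℂ ξ)) * r) :
    ((starRingEnd ℂ ξ) * leval ξ r).re = 0 := by
  have hξ0 : ξ ≠ 0 := norm_ne_zero_iff.mp (by rw [hξ]; exact one_ne_zero)
  have heval := congr_arg (leval ξ) (lstar_eq_of_symmetric_mul hξ hsym)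
  rw [leval_lstar hξ, leval_mul hξ0, leval_C_mul_T, zpow_neg_one, RCLike.inv_eq_conj hξ] at heval
  apply re_eq_zero_of_conj_eq_neg
  rw [map_mul, conj_conj, heval]
  linear_combination (-conj ξ * leval ξ r) * conj_mul_self_of_norm_eq_one hξ

/-- If `ξ ∈ S¹`, `r` is a Laurent polynomial with `r(ξ) ≠ 0` and `(t⁻¹ - conj ξ) * r(t)`
is symmetric, then `Re(conj ξ · r(ξ)) = 0`. -/
theorem re_conj_xi_mul_eval_eq_zero (ξ : ℂ) (hξ : ‖ξ‖ = 1)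
    (r : LaurentPolynomial ℂ) (hr : leval ξ r ≠ 0)
    (hsym : lstar ((T (-1) - C (starRingEnd ℂ ξ)) * r) = (T (-1) - C (starRingEnd ℂ ξ)) * r) :
    ((starRingEnd ℂ ξ) * leval ξ r).re = 0 :=
  re_conj_xi_mul_eval_eq_zero_general ξ hξ r hsym
end

section
/- Let ξ = 1 or ξ = -1 and let n be an odd positive integer. Then the cyclic module M = ℝ[t^{±1}]/((t-ξ)ⁿ) does not support any non-degenerate sesquilinear Hermitian linking form λ : M × M → ℝ(t)/ℝ[t^{±1}]. Equivalently: there is no Laurent polynomial r ∈ ℝ[t^{±1}] coprime to (t-ξ) such that r/(t-ξ)ⁿ is symmetric in ℝ(t)/ℝ[t^{±1}]. -/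
open LaurentPolynomial

/-- The involution `#` on real Laurent polynomials, sending `t` to `t⁻¹`. -/
noncomputable def lstarR (p : LaurentPolynomial ℝ) : LaurentPolynomial ℝ :=
  LaurentPolynomial.invert p

/-!
As `ξ = ±1` satisfies `ξ⁻¹ = ξ`, we have `t⁻¹ - ξ = -ξ t⁻¹ (t - ξ)`, so cancelling `(t-ξ)ⁿ` in the
symmetry condition gives `r# = (r + g (t-ξ)ⁿ) (-ξ t⁻¹)ⁿ`. Evaluating at `t = ξ` yields
`r(ξ) = (-1)ⁿ r(ξ) = -r(ξ)` for odd `n`, so `r(ξ) = 0` and `t - ξ` divides `r`.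
-/

namespace LaurentPolynomial

section CommSemiring

variable {R S : Type*} [CommSemiring R] [CommSemiring S]

theorem eval₂_invert (f : R →+* S) (x : Sˣ) (p : R[T;T⁻¹]) :
    eval₂ f x (invert p) = eval₂ f x⁻¹ p := by
  induction p using LaurentPolynomial.induction_on' with
  | add p q hp hq => rw [map_add, map_add, map_add, hp, hq]
  | C_mul_T n a => simp [zpow_neg]

end CommSemiring

section CommRing

variable {R : Type*} [CommRing R]

theorem _root_.Polynomial.toLaurent_X_sub_C (a : R) :
    Polynomial.toLaurent (Polynomial.X - Polynomial.C a) = T 1 - C a := by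
  rw [map_sub, Polynomial.toLaurent_X, Polynomial.toLaurent_C]

theorem T_one_sub_C_ne_zero [Nontrivial R] (a : R) : (T 1 - C a : R[T;T⁻¹]) ≠ 0 := by
  rw [← Polynomial.toLaurent_X_sub_C]
  exact Polynomial.toLaurent_ne_zero.mpr (Polynomial.X_sub_C_ne_zero a)

theorem T_one_sub_C_dvd_iff (u : Rˣ) (p : R[T;T⁻¹]) :
    (T 1 - C (u : R)) ∣ p ↔ eval₂ (RingHom.id R) u p = 0 := by
  constructor
  · rintro ⟨q, rfl⟩
    simp
  · intro hp
    obtain ⟨m, q, hq⟩ := exists_T_pow p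
    have hroot : q.IsRoot u := by
      rw [Polynomial.IsRoot, ← Polynomial.eval₂_id, ← eval₂_toLaurent, hq, map_mul, hp, zero_mul]
    have hdvd := map_dvd Polynomial.toLaurent (Polynomial.dvd_iff_isRoot.mpr hroot)
    rw [Polynomial.toLaurent_X_sub_C, hq] at hdvd
    simpa [mul_T_assoc] using hdvd.mul_right (T (-m))

theorem T_neg_one_sub_C (u : Rˣ) :
    (T (-1) - C (u : R) : R[T;T⁻¹]) = -(C (u : R) * T (-1)) * (T 1 - C ((u⁻¹ : Rˣ) : R)) := by
  have hT : (T (-1) * T 1 : R[T;T⁻¹]) = 1 := by rw [← T_add, neg_add_cancel, T_zero]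
  have hC : (C (u : R) * C ((u⁻¹ : Rˣ) : R) : R[T;T⁻¹]) = 1 := by
    rw [← map_mul, Units.mul_inv, map_one]
  linear_combination C (u : R) * hT - T (-1) * hC

end CommRing

/-- `h` says that `r/(t-u)ⁿ` is symmetric modulo `R[T;T⁻¹]`, with denominators cleared. -/
theorem eval₂_eq_zero_of_symmetric {R : Type*} [CommRing R] [IsDomain R] [IsAddTorsionFree R]
    (u : Rˣ) (hu : u⁻¹ = u) {n : ℕ} (hn : Odd n) {r g : R[T;T⁻¹]}
    (h : invert r * (T 1 - C (u : R)) ^ n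
      = r * (T (-1) - C (u : R)) ^ n + g * ((T 1 - C (u : R)) ^ n * (T (-1) - C (u : R)) ^ n)) :
    eval₂ (RingHom.id R) u r = 0 := by
  have hB : (T (-1) - C (u : R) : R[T;T⁻¹]) = -(C (u : R) * T (-1)) * (T 1 - C (u : R)) := by
    rw [T_neg_one_sub_C, hu]
  have hinvert : invert r = (r + g * (T 1 - C (u : R)) ^ n) * (-(C (u : R) * T (-1))) ^ n := by
    apply mul_right_cancel₀ (pow_ne_zero n (T_one_sub_C_ne_zero (u : R)))
    rw [h, hB, mul_pow]
    ring
  have hA : eval₂ (RingHom.id R) u (T 1 - C (u : R)) = 0 := (T_one_sub_C_dvd_iff u _).mp dvd_rfl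
  have hunit : eval₂ (RingHom.id R) u (-(C (u : R) * T (-1))) = -1 := by
    simp [← Units.val_mul]
  have hself := congrArg (eval₂ (RingHom.id R) u) hinvert
  rw [eval₂_invert, hu, map_mul, map_add, map_mul, map_pow, map_pow, hA, hunit, hn.neg_one_pow,
    zero_pow hn.pos.ne', mul_zero, add_zero, mul_neg_one] at hself
  exact self_eq_neg.mp hself

end LaurentPolynomial

theorem no_nondegenerate_form_on_odd_cyclic_at_pm_one_general (ξ : ℝ) (hξ : ξ = 1 ∨ ξ = -1)
    (n : ℕ) (hodd : Odd n) :
    ¬ ∃ r : LaurentPolynomial ℝ, ¬ ((T 1 - C ξ) ∣ r) ∧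
      ∃ g : LaurentPolynomial ℝ,
        lstarR r * (T 1 - C ξ) ^ n
          = r * (T (-1) - C ξ) ^ n + g * ((T 1 - C ξ) ^ n * (T (-1) - C ξ) ^ n) := by
  rintro ⟨r, hr, g, h⟩
  obtain ⟨u, hu, rfl⟩ : ∃ u : ℝˣ, u⁻¹ = u ∧ (u : ℝ) = ξ := by
    rcases hξ with rfl | rfl
    exacts [⟨1, inv_one, rfl⟩, ⟨-1, by simp, by simp⟩]
  exact hr ((T_one_sub_C_dvd_iff u r).mpr (eval₂_eq_zero_of_symmetric u hu hodd h))

/-- For `ξ = ±1` and `n` odd, the cyclic module `ℝ[t^{±1}]/(t-ξ)ⁿ` supports no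
non-degenerate linking form.  Equivalently: there is no Laurent polynomial `r`
coprime to `t - ξ` such that `r/(t-ξ)ⁿ` is symmetric in `ℝ(t)/ℝ[t^{±1}]`, where the
symmetry condition `r#/(t⁻¹-ξ)ⁿ ≡ r/(t-ξ)ⁿ mod ℝ[t^{±1}]` is expressed after clearing
denominators. -/
theorem no_nondegenerate_form_on_odd_cyclic_at_pm_one (ξ : ℝ) (hξ : ξ = 1 ∨ ξ = -1)
    (n : ℕ) (hodd : Odd n) (hpos : 0 < n) :
    ¬ ∃ r : LaurentPolynomial ℝ, ¬ ((T 1 - C ξ) ∣ r) ∧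
      ∃ g : LaurentPolynomial ℝ,
        lstarR r * (T 1 - C ξ) ^ n
          = r * (T (-1) - C ξ) ^ n + g * ((T 1 - C ξ) ^ n * (T (-1) - C ξ) ^ n) :=
  no_nondegenerate_form_on_odd_cyclic_at_pm_one_general ξ hξ n hodd
end

section
/- Let ξ ∈ S¹ with ξ ≠ ±1, n a positive integer, ε = ±1, and let R_ξ(t) = (t-ξ)(1 - conj(ξ)t⁻¹) ∈ ℝ[t^{±1}]. Then the pairing e(n,ε,ξ,ℝ) on M = ℝ[t^{±1}]/R_ξ(t)ⁿ given by (x,y) ↦ ε·x·y# / R_ξ(t)ⁿ ∈ ℝ(t)/ℝ[t^{±1}] is a well-defined, sesquilinear, Hermitian, non-singular linking form. -/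
open LaurentPolynomial

/-- The real basic polynomial `R_ξ(t) = (t-ξ)(1-conj(ξ)t⁻¹) = t - 2Re(ξ) + t⁻¹` for
`ξ ∈ S¹ ∖ {±1}`. -/
noncomputable def RxiR (ξ : ℂ) : LaurentPolynomial ℝ :=
  T 1 - C (2 * ξ.re) + T (-1)

/-- Representative-level formula for the basic pairing `e(n,ε,ξ,ℝ)`:
`(x, y) ↦ ε·x·y# / R_ξ(t)ⁿ`, computed in the fraction field `Q` of `ℝ[t^{±1}]`. -/
noncomputable def lamE (Q : Type*) [Field Q] [Algebra (LaurentPolynomial ℝ) Q]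
    (ε : ℝ) (ξ : ℂ) (n : ℕ) (x y : LaurentPolynomial ℝ) : Q :=
  algebraMap (LaurentPolynomial ℝ) Q (C ε * (x * lstarR y)) *
    (algebraMap (LaurentPolynomial ℝ) Q ((RxiR ξ) ^ n))⁻¹

/-!
The pairing `(x, y) ↦ u·x·τ(y)/d`, for a ring endomorphism `τ` of a commutative ring `A`, a
unit `u` and a `τ`-fixed `d` that is nonzero in a field `Q ⊇ A`, descends to `A/d` with values
in `Q/A`. Its adjoint is bijective: a `τ`-semilinear functional on `A/d` is determined by its
value at `1`, an element of `Q/A` killed by `d`, hence of the form `p/d`, and `x = u⁻¹p`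
represents it.
-/

noncomputable def linkingPairing (Q : Type*) {A : Type*} [CommRing A] [Field Q] [Algebra A Q]
    (τ : A →+* A) (u d x y : A) : Q :=
  algebraMap A Q (u * (x * τ y)) * (algebraMap A Q d)⁻¹

section LinkingPairing

variable {A Q : Type*} [CommRing A] [Field Q] [Algebra A Q] {τ : A →+* A} {u d : A}

theorem mk_algebraMap_eq_zero (a : A) :
    (Submodule.Quotient.mk (algebraMap A Q a) : Q ⧸ LinearMap.range (Algebra.linearMap A Q))
      = 0 :=
  (Submodule.Quotient.mk_eq_zero _).2 ⟨a, rfl⟩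

theorem linkingPairing_add_left (x x' y : A) :
    linkingPairing Q τ u d (x + x') y =
      linkingPairing Q τ u d x y + linkingPairing Q τ u d x' y := by
  simp only [linkingPairing, add_mul, mul_add, map_add]

theorem linkingPairing_add_right (x y y' : A) :
    linkingPairing Q τ u d x (y + y') =
      linkingPairing Q τ u d x y + linkingPairing Q τ u d x y' := by
  simp only [linkingPairing, map_add, add_mul, mul_add]

theorem linkingPairing_mul_left (r x y : A) :
    linkingPairing Q τ u d (r * x) y = algebraMap A Q r * linkingPairing Q τ u d x y := by
  rw [linkingPairing, linkingPairing, show u * (r * x * τ y) = r * (u * (x * τ y)) by ring,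
    map_mul, mul_assoc]

theorem linkingPairing_mul_right (r x y : A) :
    linkingPairing Q τ u d x (r * y) = algebraMap A Q (τ r) * linkingPairing Q τ u d x y := by
  rw [linkingPairing, linkingPairing, map_mul τ,
    show u * (x * (τ r * τ y)) = τ r * (u * (x * τ y)) by ring, map_mul, mul_assoc]

theorem linkingPairing_mul_left_eq (hd : algebraMap A Q d ≠ 0) (x y : A) :
    linkingPairing Q τ u d (d * x) y = algebraMap A Q (u * (x * τ y)) := by
  rw [linkingPairing_mul_left, linkingPairing, mul_left_comm, mul_inv_cancel₀ hd, mul_one]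

theorem linkingPairing_mul_right_eq (hτd : τ d = d) (hd : algebraMap A Q d ≠ 0) (x y : A) :
    linkingPairing Q τ u d x (d * y) = algebraMap A Q (u * (x * τ y)) := by
  rw [linkingPairing_mul_right, hτd, linkingPairing, mul_left_comm, mul_inv_cancel₀ hd, mul_one]

theorem mk_linkingPairing_add_mul_left (hd : algebraMap A Q d ≠ 0) (x y z : A) :
    (Submodule.Quotient.mk (linkingPairing Q τ u d (x + d * z) y)
        : Q ⧸ LinearMap.range (Algebra.linearMap A Q))
      = Submodule.Quotient.mk (linkingPairing Q τ u d x y) := by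
  rw [linkingPairing_add_left, Submodule.Quotient.mk_add, linkingPairing_mul_left_eq hd,
    mk_algebraMap_eq_zero, add_zero]

theorem mk_linkingPairing_add_mul_right (hτd : τ d = d) (hd : algebraMap A Q d ≠ 0)
    (x y z : A) :
    (Submodule.Quotient.mk (linkingPairing Q τ u d x (y + d * z))
        : Q ⧸ LinearMap.range (Algebra.linearMap A Q))
      = Submodule.Quotient.mk (linkingPairing Q τ u d x y) := by
  rw [linkingPairing_add_right, Submodule.Quotient.mk_add, linkingPairing_mul_right_eq hτd hd,
    mk_algebraMap_eq_zero, add_zero]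

theorem map_linkingPairing (σ : Q →+* Q)
    (hσ : ∀ r, σ (algebraMap A Q r) = algebraMap A Q (τ r)) (hτ : Function.Involutive τ)
    (hτu : τ u = u) (hτd : τ d = d) (x y : A) :
    σ (linkingPairing Q τ u d x y) = linkingPairing Q τ u d y x := by
  simp only [linkingPairing, map_mul, map_inv₀, hσ, hτu, hτd, hτ y,
    mul_comm (algebraMap A Q (τ x))]

theorem dvd_of_forall_mk_linkingPairing_eq_zero (hφ : Function.Injective (algebraMap A Q))
    (hu : IsUnit u) (hd : algebraMap A Q d ≠ 0) {x : A}
    (hx : ∀ y, (Submodule.Quotient.mk (linkingPairing Q τ u d x y)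
        : Q ⧸ LinearMap.range (Algebra.linearMap A Q)) = 0) :
    d ∣ x := by
  obtain ⟨r, hr⟩ := (Submodule.Quotient.mk_eq_zero _).1 (hx 1)
  rw [Algebra.linearMap_apply] at hr
  have hrd : r * d = u * x := hφ <| by
    rw [map_mul, hr, linkingPairing, map_one, mul_one, inv_mul_cancel_right₀ hd]
  obtain ⟨v, hv⟩ := hu.exists_left_inv
  exact ⟨v * r, by linear_combination (-v) * hrd - x * hv⟩

theorem exists_mk_linkingPairing_eq_smul (hu : IsUnit u) (hd : algebraMap A Q d ≠ 0)
    {c : Q ⧸ LinearMap.range (Algebra.linearMap A Q)} (hc : d • c = 0) :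
    ∃ x, ∀ y, Submodule.Quotient.mk (linkingPairing Q τ u d x y) = τ y • c := by
  obtain ⟨q, rfl⟩ := Submodule.Quotient.mk_surjective _ c
  rw [← Submodule.Quotient.mk_smul, Submodule.Quotient.mk_eq_zero] at hc
  obtain ⟨p, hp⟩ := hc
  rw [Algebra.linearMap_apply] at hp
  have hq : q = algebraMap A Q p * (algebraMap A Q d)⁻¹ := by
    rw [hp, Algebra.smul_def, mul_comm, inv_mul_cancel_left₀ hd]
  obtain ⟨v, hv⟩ := hu.exists_left_inv
  refine ⟨v * p, fun y => ?_⟩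
  have hpair : linkingPairing Q τ u d (v * p) y = algebraMap A Q (τ y) * q := by
    rw [hq, linkingPairing, show u * (v * p * τ y) = v * u * (τ y * p) by ring, hv, one_mul,
      map_mul, mul_assoc]
  rw [hpair, ← Algebra.smul_def, Submodule.Quotient.mk_smul]

theorem exists_mk_linkingPairing_eq (hu : IsUnit u) (hτd : τ d = d)
    (hd : algebraMap A Q d ≠ 0) (f : A → Q ⧸ LinearMap.range (Algebra.linearMap A Q))
    (hf : ∀ r y, f (r * y) = τ r • f y) (hfd : ∀ y z, f (y + d * z) = f y) :
    ∃ x, ∀ y, Submodule.Quotient.mk (linkingPairing Q τ u d x y) = f y := by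
  have hf0 : f 0 = 0 := by rw [← mul_zero 0, hf, map_zero, zero_smul]
  have hf1 : d • f 1 = 0 := by
    rw [← hτd, ← hf, ← zero_add (d * 1), hfd, hf0]
  obtain ⟨x, hx⟩ := exists_mk_linkingPairing_eq_smul (τ := τ) hu hd hf1
  exact ⟨x, fun y => by rw [hx, ← hf, mul_one]⟩

end LinkingPairing

theorem invert_RxiR (ξ : ℂ) : invert (RxiR ξ) = RxiR ξ := by
  simp only [RxiR, map_add, map_sub, invert_T, invert_C, neg_neg]
  abel

theorem RxiR_ne_zero (ξ : ℂ) : RxiR ξ ≠ 0 := fun h => by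
  simpa [RxiR, ← map_mul] using congrArg (fun p : LaurentPolynomial ℝ => p.coeff 1) h

theorem basic_real_pairing_nonsingular_linking_form_general
    (Q : Type*) [Field Q] [Algebra (LaurentPolynomial ℝ) Q]
    [IsFractionRing (LaurentPolynomial ℝ) Q]
    (σ : Q →+* Q)
    (hσ : ∀ r : LaurentPolynomial ℝ,
      σ (algebraMap (LaurentPolynomial ℝ) Q r) = algebraMap (LaurentPolynomial ℝ) Q (lstarR r))
    (ξ : ℂ) (n : ℕ) (ε : ℝ) (hε : ε = 1 ∨ ε = -1) :
    -- well-definedness on `ℝ[t^{±1}]/R_ξⁿ`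
    (∀ x y z : LaurentPolynomial ℝ,
      (Submodule.Quotient.mk (lamE Q ε ξ n (x + RxiR ξ ^ n * z) y)
          : Q ⧸ LinearMap.range (Algebra.linearMap (LaurentPolynomial ℝ) Q))
        = Submodule.Quotient.mk (lamE Q ε ξ n x y) ∧
      (Submodule.Quotient.mk (lamE Q ε ξ n x (y + RxiR ξ ^ n * z))
          : Q ⧸ LinearMap.range (Algebra.linearMap (LaurentPolynomial ℝ) Q))
        = Submodule.Quotient.mk (lamE Q ε ξ n x y))
    -- sesquilinearity
    ∧ (∀ x x' y : LaurentPolynomial ℝ,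
        lamE Q ε ξ n (x + x') y = lamE Q ε ξ n x y + lamE Q ε ξ n x' y)
    ∧ (∀ x y y' : LaurentPolynomial ℝ,
        lamE Q ε ξ n x (y + y') = lamE Q ε ξ n x y + lamE Q ε ξ n x y')
    ∧ (∀ (r : LaurentPolynomial ℝ) (x y : LaurentPolynomial ℝ),
        lamE Q ε ξ n (r * x) y = algebraMap (LaurentPolynomial ℝ) Q r * lamE Q ε ξ n x y)
    ∧ (∀ (r : LaurentPolynomial ℝ) (x y : LaurentPolynomial ℝ),
        lamE Q ε ξ n x (r * y)
          = algebraMap (LaurentPolynomial ℝ) Q (lstarR r) * lamE Q ε ξ n x y)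
    -- Hermitian
    ∧ (∀ x y : LaurentPolynomial ℝ,
        (Submodule.Quotient.mk (lamE Q ε ξ n y x)
            : Q ⧸ LinearMap.range (Algebra.linearMap (LaurentPolynomial ℝ) Q))
          = Submodule.Quotient.mk (σ (lamE Q ε ξ n x y)))
    -- non-singularity: the adjoint is injective …
    ∧ (∀ x : LaurentPolynomial ℝ,
        (∀ y : LaurentPolynomial ℝ,
          (Submodule.Quotient.mk (lamE Q ε ξ n x y)
              : Q ⧸ LinearMap.range (Algebra.linearMap (LaurentPolynomial ℝ) Q)) = 0) →
        RxiR ξ ^ n ∣ x)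
    -- … and surjective onto the semilinear functionals of the quotient module
    ∧ (∀ f : LaurentPolynomial ℝ →
          Q ⧸ LinearMap.range (Algebra.linearMap (LaurentPolynomial ℝ) Q),
        (∀ y y', f (y + y') = f y + f y') →
        (∀ r y, f (r * y) = lstarR r • f y) →
        (∀ y z, f (y + RxiR ξ ^ n * z) = f y) →
        ∃ x : LaurentPolynomial ℝ, ∀ y : LaurentPolynomial ℝ,
          (Submodule.Quotient.mk (lamE Q ε ξ n x y)
              : Q ⧸ LinearMap.range (Algebra.linearMap (LaurentPolynomial ℝ) Q)) = f y) := by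
  let τ : LaurentPolynomial ℝ →+* LaurentPolynomial ℝ :=
    (invert : LaurentPolynomial ℝ ≃ₐ[ℝ] LaurentPolynomial ℝ)
  have hlam : lamE Q ε ξ n = linkingPairing Q τ (C ε) (RxiR ξ ^ n) := rfl
  have hinj := IsFractionRing.injective (LaurentPolynomial ℝ) Q
  have hd : algebraMap _ Q (RxiR ξ ^ n) ≠ 0 :=
    (map_ne_zero_iff _ hinj).2 (pow_ne_zero _ (RxiR_ne_zero ξ))
  have hτd : τ (RxiR ξ ^ n) = RxiR ξ ^ n :=
    (map_pow τ _ n).trans (congrArg (· ^ n) (invert_RxiR ξ))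
  have hε0 : ε ≠ 0 := by rcases hε with rfl | rfl <;> norm_num
  have hu : IsUnit (C ε) := (isUnit_iff_ne_zero.2 hε0).map C
  simp only [hlam]
  refine ⟨fun x y z => ⟨mk_linkingPairing_add_mul_left hd x y z,
      mk_linkingPairing_add_mul_right hτd hd x y z⟩,
    linkingPairing_add_left, linkingPairing_add_right, linkingPairing_mul_left,
    linkingPairing_mul_right, fun x y => ?_,
    fun x => dvd_of_forall_mk_linkingPairing_eq_zero hinj hu hd,
    fun f _ hf hfd => exists_mk_linkingPairing_eq hu hτd hd f hf hfd⟩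
  rw [map_linkingPairing σ hσ involutive_invert (invert_C ε) hτd]

/-- **The basic real pairing `e(n,ε,ξ,ℝ)` is a non-singular linking form.**
For `ξ ∈ S¹ ∖ {±1}`, `n > 0` and `ε = ±1`, the pairing `(x,y) ↦ ε·x·y#/R_ξ(t)ⁿ` on
`M = ℝ[t^{±1}]/R_ξ(t)ⁿ` with values in `ℝ(t)/ℝ[t^{±1}]` is well defined, sesquilinear,
Hermitian and non-singular. -/
theorem basic_real_pairing_nonsingular_linking_form
    (Q : Type*) [Field Q] [Algebra (LaurentPolynomial ℝ) Q]
    [IsFractionRing (LaurentPolynomial ℝ) Q]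
    (σ : Q →+* Q)
    (hσ : ∀ r : LaurentPolynomial ℝ,
      σ (algebraMap (LaurentPolynomial ℝ) Q r) = algebraMap (LaurentPolynomial ℝ) Q (lstarR r))
    (ξ : ℂ) (hξ : ‖ξ‖ = 1) (hξ1 : ξ ≠ 1) (hξ2 : ξ ≠ -1)
    (n : ℕ) (hn : 0 < n) (ε : ℝ) (hε : ε = 1 ∨ ε = -1) :
    -- well-definedness on `ℝ[t^{±1}]/R_ξⁿ`
    (∀ x y z : LaurentPolynomial ℝ,
      (Submodule.Quotient.mk (lamE Q ε ξ n (x + RxiR ξ ^ n * z) y)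
          : Q ⧸ LinearMap.range (Algebra.linearMap (LaurentPolynomial ℝ) Q))
        = Submodule.Quotient.mk (lamE Q ε ξ n x y) ∧
      (Submodule.Quotient.mk (lamE Q ε ξ n x (y + RxiR ξ ^ n * z))
          : Q ⧸ LinearMap.range (Algebra.linearMap (LaurentPolynomial ℝ) Q))
        = Submodule.Quotient.mk (lamE Q ε ξ n x y))
    -- sesquilinearity
    ∧ (∀ x x' y : LaurentPolynomial ℝ,
        lamE Q ε ξ n (x + x') y = lamE Q ε ξ n x y + lamE Q ε ξ n x' y)
    ∧ (∀ x y y' : LaurentPolynomial ℝ,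
        lamE Q ε ξ n x (y + y') = lamE Q ε ξ n x y + lamE Q ε ξ n x y')
    ∧ (∀ (r : LaurentPolynomial ℝ) (x y : LaurentPolynomial ℝ),
        lamE Q ε ξ n (r * x) y = algebraMap (LaurentPolynomial ℝ) Q r * lamE Q ε ξ n x y)
    ∧ (∀ (r : LaurentPolynomial ℝ) (x y : LaurentPolynomial ℝ),
        lamE Q ε ξ n x (r * y)
          = algebraMap (LaurentPolynomial ℝ) Q (lstarR r) * lamE Q ε ξ n x y)
    -- Hermitian
    ∧ (∀ x y : LaurentPolynomial ℝ,
        (Submodule.Quotient.mk (lamE Q ε ξ n y x)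
            : Q ⧸ LinearMap.range (Algebra.linearMap (LaurentPolynomial ℝ) Q))
          = Submodule.Quotient.mk (σ (lamE Q ε ξ n x y)))
    -- non-singularity: the adjoint is injective …
    ∧ (∀ x : LaurentPolynomial ℝ,
        (∀ y : LaurentPolynomial ℝ,
          (Submodule.Quotient.mk (lamE Q ε ξ n x y)
              : Q ⧸ LinearMap.range (Algebra.linearMap (LaurentPolynomial ℝ) Q)) = 0) →
        RxiR ξ ^ n ∣ x)
    -- … and surjective onto the semilinear functionals of the quotient module
    ∧ (∀ f : LaurentPolynomial ℝ →
          Q ⧸ LinearMap.range (Algebra.linearMap (LaurentPolynomial ℝ) Q),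
        (∀ y y', f (y + y') = f y + f y') →
        (∀ r y, f (r * y) = lstarR r • f y) →
        (∀ y z, f (y + RxiR ξ ^ n * z) = f y) →
        ∃ x : LaurentPolynomial ℝ, ∀ y : LaurentPolynomial ℝ,
          (Submodule.Quotient.mk (lamE Q ε ξ n x y)
              : Q ⧸ LinearMap.range (Algebra.linearMap (LaurentPolynomial ℝ) Q)) = f y) :=
  basic_real_pairing_nonsingular_linking_form_general Q σ hσ ξ n ε hε
end

section
/- Let F = ℝ or ℂ and let (M, λ) be a linking form over F[t^{±1}] whose primary part M_p and M_{p#} are both nonzero, where p is an irreducible polynomial that is NOT weakly symmetric (p is not a unit multiple of p#). Then the restriction of λ to M_p ⊕ M_{p#} is metabolic, with both M_p and M_{p#} serving as metabolizers. -/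
open LaurentPolynomial

/-- The involution `#` on Laurent polynomials over `𝔽 = ℝ, ℂ`: `t ↦ t⁻¹` together with
conjugation of the coefficients. -/
noncomputable def lstarF {𝔽 : Type*} [RCLike 𝔽] (p : LaurentPolynomial 𝔽) :
    LaurentPolynomial 𝔽 :=
  AddMonoidAlgebra.ofCoeff
    (Finsupp.mapRange (starRingEnd 𝔽) (map_zero _) (LaurentPolynomial.invert p).coeff)

/-- The quotient `Q/R` where `R = 𝔽[t^{±1}]` and `Q` is its field of fractions. -/
abbrev QRmod (𝔽 : Type*) [RCLike 𝔽] (Q : Type*) [Field Q]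
    [Algebra (LaurentPolynomial 𝔽) Q] : Type _ :=
  Q ⧸ LinearMap.range (Algebra.linearMap (LaurentPolynomial 𝔽) Q)

/-- The `p`-primary part `M_p = {x ∈ M : pⁿ·x = 0 for some n}` of a module `M`. -/
noncomputable def primaryPart {𝔽 : Type*} [RCLike 𝔽] (M : Type*) [AddCommGroup M]
    [Module (LaurentPolynomial 𝔽) M] (p : LaurentPolynomial 𝔽) :
    Submodule (LaurentPolynomial 𝔽) M :=
  ⨆ n : ℕ, Submodule.torsionBy (LaurentPolynomial 𝔽) M (p ^ n)

/-! Since `p` is irreducible and not associated to `p#`, the elements `p` and `p#` are coprime.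
For `x, y ∈ M_p`, `λ(x, y)` is killed by a power of `p` (acting on `x`) and by a power of `p#`
(acting on `y`), so it vanishes: `M_p`, and likewise `M_{p#}`, is isotropic. If
`a + b ∈ M_p ⊕ M_{p#}` is orthogonal to `M_p`, then `b` is orthogonal to both summands, so `b = 0`
by non-degeneracy. -/

theorem IsLocalization.isPrincipalIdealRing {R S : Type*} [CommRing R] [CommRing S] [Algebra R S]
    (W : Submonoid R) [IsLocalization W S] [IsPrincipalIdealRing R] :
    IsPrincipalIdealRing S where
  principal J := by
    obtain ⟨a, ha⟩ := IsPrincipalIdealRing.principal (J.comap (algebraMap R S))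
    refine ⟨algebraMap R S a, ?_⟩
    rw [← IsLocalization.map_under W S J, Ideal.under, ha, Ideal.submodule_span_eq,
      Ideal.map_span, Set.image_singleton]

instance {K : Type*} [Field K] : IsPrincipalIdealRing K[T;T⁻¹] :=
  IsLocalization.isPrincipalIdealRing (Submonoid.powers (Polynomial.X : Polynomial K))

theorem IsCoprime.eq_zero_of_smul_eq_zero {R N : Type*} [CommSemiring R] [AddCommMonoid N]
    [Module R N] {r s : R} (hrs : IsCoprime r s) {z : N} (hr : r • z = 0) (hs : s • z = 0) :
    z = 0 := by
  obtain ⟨a, b, hab⟩ := hrs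
  rw [← one_smul R z, ← hab, add_smul, mul_smul, mul_smul, hr, hs, smul_zero, smul_zero,
    add_zero]

section Involution

variable {𝔽 : Type*} [RCLike 𝔽]

noncomputable def lstarFRingHom : 𝔽[T;T⁻¹] →+* 𝔽[T;T⁻¹] :=
  (AddMonoidAlgebra.mapRingHom ℤ (starRingEnd 𝔽)).comp (invert (R := 𝔽)).toRingHom

theorem coe_lstarFRingHom : ⇑(lstarFRingHom (𝔽 := 𝔽)) = lstarF := by
  funext q
  ext n
  simp [lstarFRingHom, lstarF]

theorem lstarF_lstarF (q : 𝔽[T;T⁻¹]) : lstarF (lstarF q) = q := by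
  ext n
  simp [lstarF]

theorem isCoprime_lstarF {p : 𝔽[T;T⁻¹]} (hp : Irreducible p)
    (hnws : ¬ Associated p (lstarF p)) : IsCoprime p (lstarF p) := by
  refine hp.coprime_iff_not_dvd.mpr fun hdvd => hnws (associated_of_dvd_dvd hdvd ?_)
  simpa only [coe_lstarFRingHom, lstarF_lstarF] using map_dvd lstarFRingHom hdvd

end Involution

namespace LinearMap

variable {R S M M' N : Type*} [CommRing R] [CommRing S] [AddCommGroup M] [Module R M]
  [AddCommGroup M'] [Module S M'] [AddCommGroup N] [Module R N] {φ : S →+* R}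

theorem apply_eq_zero_of_isCoprime (B : M →ₗ[R] M' →ₛₗ[φ] N) {r : R} {s : S}
    (hrs : IsCoprime r (φ s)) {x : M} {y : M'} (hx : r • x = 0) (hy : s • y = 0) :
    B x y = 0 :=
  hrs.eq_zero_of_smul_eq_zero (by rw [← smul_apply, ← map_smul, hx, map_zero, zero_apply])
    (by rw [← map_smulₛₗ, hy, map_zero])

theorem mem_iff_forall_apply_eq_zero_of_isotropic {ψ : R →+* R} (B : M →ₗ[R] M →ₛₗ[ψ] N)
    {A C : Submodule R M}
    (hA : ∀ x ∈ A, ∀ y ∈ A, B x y = 0) (hC : ∀ x ∈ C, ∀ y ∈ C, B x y = 0)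
    (hnd : ∀ x ∈ A ⊔ C, (∀ y ∈ A ⊔ C, B x y = 0) → x = 0) {x : M} (hx : x ∈ A ⊔ C) :
    x ∈ A ↔ ∀ y ∈ A, B x y = 0 := by
  refine ⟨fun hxA => hA x hxA, fun hxA => ?_⟩
  obtain ⟨a, ha, c, hc, rfl⟩ := Submodule.mem_sup.mp hx
  suffices c = 0 by rwa [this, add_zero]
  refine hnd c (Submodule.mem_sup_right hc) fun y hy => ?_
  obtain ⟨ya, hya, yc, hyc, rfl⟩ := Submodule.mem_sup.mp hy
  have hcA : B c ya = 0 := by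
    simpa only [map_add, add_apply, hA a ha ya hya, zero_add] using hxA ya hya
  rw [map_add, hcA, hC c hc yc hyc, add_zero]

end LinearMap

section PrimaryPart

variable {𝔽 : Type*} [RCLike 𝔽] {M M' N : Type*} [AddCommGroup M] [Module 𝔽[T;T⁻¹] M]
  [AddCommGroup M'] [Module 𝔽[T;T⁻¹] M'] [AddCommGroup N] [Module 𝔽[T;T⁻¹] N]

theorem mem_primaryPart_iff {q : 𝔽[T;T⁻¹]} {x : M} :
    x ∈ primaryPart M q ↔ ∃ n : ℕ, q ^ n • x = 0 := by
  have hmono : Monotone fun n : ℕ => Submodule.torsionBy 𝔽[T;T⁻¹] M (q ^ n) :=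
    fun _ _ hmn => Submodule.torsionBy_le_torsionBy_of_dvd _ _ (pow_dvd_pow q hmn)
  simp only [primaryPart, Submodule.mem_iSup_of_directed _ hmono.directed_le,
    Submodule.mem_torsionBy_iff]

theorem LinearMap.apply_eq_zero_of_mem_primaryPart {φ : 𝔽[T;T⁻¹] →+* 𝔽[T;T⁻¹]}
    (B : M →ₗ[𝔽[T;T⁻¹]] M' →ₛₗ[φ] N) {p q : 𝔽[T;T⁻¹]} (hpq : IsCoprime p (φ q)) {x : M} {y : M'}
    (hx : x ∈ primaryPart M p) (hy : y ∈ primaryPart M' q) : B x y = 0 := by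
  obtain ⟨m, hm⟩ := mem_primaryPart_iff.mp hx
  obtain ⟨n, hn⟩ := mem_primaryPart_iff.mp hy
  exact B.apply_eq_zero_of_isCoprime (by rw [map_pow]; exact hpq.pow) hm hn

end PrimaryPart

theorem primary_parts_are_metabolizers_general
    {𝔽 : Type*} [RCLike 𝔽] (Q : Type*) [Field Q] [Algebra (LaurentPolynomial 𝔽) Q]
    (M : Type*) [AddCommGroup M] [Module (LaurentPolynomial 𝔽) M]
    (lam : M → M → QRmod 𝔽 Q)
    (hadd₁ : ∀ x x' y : M, lam (x + x') y = lam x y + lam x' y)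
    (hadd₂ : ∀ x y y' : M, lam x (y + y') = lam x y + lam x y')
    (hsmul₁ : ∀ (r : LaurentPolynomial 𝔽) (x y : M), lam (r • x) y = r • lam x y)
    (hsmul₂ : ∀ (r : LaurentPolynomial 𝔽) (x y : M), lam x (r • y) = lstarF r • lam x y)
    (p : LaurentPolynomial 𝔽) (hp : Irreducible p)
    (hnws : ¬ Associated p (lstarF p))
    (hnd : ∀ x ∈ primaryPart M p ⊔ primaryPart M (lstarF p),
      (∀ y ∈ primaryPart M p ⊔ primaryPart M (lstarF p), lam x y = 0) → x = 0) :
    (∀ x ∈ primaryPart M p ⊔ primaryPart M (lstarF p),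
      (x ∈ primaryPart M p ↔ ∀ y ∈ primaryPart M p, lam x y = 0))
    ∧ (∀ x ∈ primaryPart M p ⊔ primaryPart M (lstarF p),
      (x ∈ primaryPart M (lstarF p) ↔ ∀ y ∈ primaryPart M (lstarF p), lam x y = 0)) := by
  let B : M →ₗ[𝔽[T;T⁻¹]] M →ₛₗ[lstarFRingHom] QRmod 𝔽 Q :=
    LinearMap.mk₂'ₛₗ (RingHom.id _) lstarFRingHom lam hadd₁ hsmul₁ hadd₂
      (by simpa only [coe_lstarFRingHom] using hsmul₂)
  have hcop := isCoprime_lstarF hp hnws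
  have hpp : ∀ x ∈ primaryPart M p, ∀ y ∈ primaryPart M p, B x y = 0 := fun x hx y hy =>
    B.apply_eq_zero_of_mem_primaryPart (by rwa [coe_lstarFRingHom]) hx hy
  have hss : ∀ x ∈ primaryPart M (lstarF p), ∀ y ∈ primaryPart M (lstarF p), B x y = 0 :=
    fun x hx y hy => B.apply_eq_zero_of_mem_primaryPart
      (by rw [coe_lstarFRingHom, lstarF_lstarF]; exact hcop.symm) hx hy
  refine ⟨fun x hx => B.mem_iff_forall_apply_eq_zero_of_isotropic hpp hss hnd hx, fun x hx => ?_⟩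
  rw [sup_comm] at hx hnd
  exact B.mem_iff_forall_apply_eq_zero_of_isotropic hss hpp hnd hx

/-- **Non weakly symmetric primary parts give metabolic summands.**  Let `(M, λ)` be a
linking form over `𝔽[t^{±1}]`, and let `p` be irreducible and not weakly symmetric
(`p` not associated to `p#`), with `M_p ≠ 0 ≠ M_{p#}`.  If the restriction of `λ` to
`N = M_p ⊕ M_{p#}` is non-degenerate (hence non-singular), then it is metabolic: both
`M_p` and `M_{p#}` are equal to their own orthogonal complements inside `N`. -/
theorem primary_parts_are_metabolizers
    {𝔽 : Type*} [RCLike 𝔽] (Q : Type*) [Field Q] [Algebra (LaurentPolynomial 𝔽) Q]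
    [IsFractionRing (LaurentPolynomial 𝔽) Q]
    (σ : Q →+* Q)
    (hσ : ∀ r : LaurentPolynomial 𝔽,
      σ (algebraMap (LaurentPolynomial 𝔽) Q r) = algebraMap (LaurentPolynomial 𝔽) Q (lstarF r))
    (M : Type*) [AddCommGroup M] [Module (LaurentPolynomial 𝔽) M]
    [Module.Finite (LaurentPolynomial 𝔽) M]
    (htors : ∀ x : M, ∃ r : LaurentPolynomial 𝔽, r ≠ 0 ∧ r • x = 0)
    (lam : M → M → QRmod 𝔽 Q)
    (hadd₁ : ∀ x x' y : M, lam (x + x') y = lam x y + lam x' y)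
    (hadd₂ : ∀ x y y' : M, lam x (y + y') = lam x y + lam x y')
    (hsmul₁ : ∀ (r : LaurentPolynomial 𝔽) (x y : M), lam (r • x) y = r • lam x y)
    (hsmul₂ : ∀ (r : LaurentPolynomial 𝔽) (x y : M), lam x (r • y) = lstarF r • lam x y)
    (hherm : ∀ x y : M, ∃ qq : Q, lam x y = Submodule.Quotient.mk qq ∧
        lam y x = Submodule.Quotient.mk (σ qq))
    (p : LaurentPolynomial 𝔽) (hp : Irreducible p)
    (hnws : ¬ Associated p (lstarF p))
    (hMp : primaryPart M p ≠ ⊥) (hMps : primaryPart M (lstarF p) ≠ ⊥)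
    (hnd : ∀ x ∈ primaryPart M p ⊔ primaryPart M (lstarF p),
      (∀ y ∈ primaryPart M p ⊔ primaryPart M (lstarF p), lam x y = 0) → x = 0) :
    (∀ x ∈ primaryPart M p ⊔ primaryPart M (lstarF p),
      (x ∈ primaryPart M p ↔ ∀ y ∈ primaryPart M p, lam x y = 0))
    ∧ (∀ x ∈ primaryPart M p ⊔ primaryPart M (lstarF p),
      (x ∈ primaryPart M (lstarF p) ↔ ∀ y ∈ primaryPart M (lstarF p), lam x y = 0)) :=
  primary_parts_are_metabolizers_general Q M lam hadd₁ hadd₂ hsmul₁ hsmul₂ p hp hnws hnd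
end
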